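/- Let A₁, …, Aₙ be events on a finite probability space P on an alphabet Ω. Then the following conditions are equivalent to one another: (i) the events A₁, …, Aₙ are independent on P, i.e., for every 1 ≤ i₁ < ⋯ < i_k ≤ n, P(A_{i₁} ∩ ⋯ ∩ A_{i_k}) = P(A_{i₁})⋯P(A_{i_k}); (ii) for every Martin-Löf P-random infinite sequence α over Ω, the ensembles χ_{A₁}(α), …, χ_{Aₙ}(α) are independent; (iii) there exists a Martin-Löf P-random infinite sequence α over Ω such that the ensembles χ_{A₁}(α), …, χ_{Aₙ}(α) are independent. -/

import Mathlib

/-!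
(i) ⇒ (ii): a letterwise map `φ` preserves Martin-Löf randomness, since a test for the image
sequence pulls back along `φ` to a test of the same measure. The image of `P` under
`a ↦ (a ∈ Aᵢ)ᵢ` is the product of the `P_{Aᵢ}` exactly when the events are independent: expanding
the products reduces both to the mixed moments `P(A_{i₁} ∩ ⋯ ∩ A_{i_k})`.

(iii) ⇒ (i): a sequence is random for at most one distribution. If `Q₁ b < a / d < Q₂ b`,
Chebyshev's inequality along the word lengths `d² 2ʲ` gives a `Q₁`-test that forces the frequency
of `b` in a `Q₁`-random sequence eventually below `a / d`, and a `Q₂`-test that forces it in a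
`Q₂`-random sequence eventually above. Hence the image of `P` is the product of the `P_{Aᵢ}`.

(ii) ⇒ (iii): random sequences exist. There are only countably many tests; level `i + 2` of the
`i`-th one has measure below `2⁻ⁱ / 4`, and by compactness of `Ω^ℕ` open sets of total measure at
most `1 / 2` cannot cover all sequences.
-/

open scoped BigOperators

namespace Paper

/-- The measure `λ_P([S])` of the open set generated by a set `S` of strings over `Ω`:
the supremum over `n` of the `P`-weight of all length-`n` strings extending some string in `S`. -/
noncomputable def cylMeasure {Ω : Type*} [Fintype Ω] (P : Ω → ℝ) (S : Set (List Ω)) : ℝ :=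
  ⨆ n : ℕ, ∑ τ : Fin n → Ω,
    Set.indicator {τ : Fin n → Ω | ∃ σ ∈ S, σ <+: List.ofFn τ} (fun τ => ∏ i, P (τ i)) τ

/-- The prefix of length `n` of the infinite sequence `α`. -/
def seqPrefix {Ω : Type*} (α : ℕ → Ω) (n : ℕ) : List Ω := List.ofFn fun i : Fin n => α i

/-- `α` belongs to the open set `[S]` generated by the set of strings `S`. -/
def inOpen {Ω : Type*} (S : Set (List Ω)) (α : ℕ → Ω) : Prop :=
  ∃ σ ∈ S, seqPrefix α σ.length = σ

/-- `P` is a finite probability space on the alphabet `Ω`. -/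
def IsFPS {Ω : Type*} [Fintype Ω] (P : Ω → ℝ) : Prop :=
  (∀ a, 0 ≤ P a) ∧ ∑ a, P a = 1

/-- `C ⊆ ℕ × Ω*` is recursively enumerable (under a canonical encoding of the
finite alphabet `Ω` by an initial segment of `ℕ`). -/
def REset {Ω : Type*} [Fintype Ω] (C : Set (ℕ × List Ω)) : Prop :=
  ∃ e : Ω ≃ Fin (Fintype.card Ω),
    REPred fun p : ℕ × List (Fin (Fintype.card Ω)) => (p.1, p.2.map e.symm) ∈ C

/-- A Martin-Löf `P`-test. -/
def MLTest {Ω : Type*} [Fintype Ω] (P : Ω → ℝ) (C : Set (ℕ × List Ω)) : Prop :=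
  REset C ∧ ∀ n : ℕ, 0 < n → cylMeasure P {σ | (n, σ) ∈ C} < (2 : ℝ)⁻¹ ^ n

/-- `α` is Martin-Löf `P`-random. -/
def MLRandom {Ω : Type*} [Fintype Ω] (P : Ω → ℝ) (α : ℕ → Ω) : Prop :=
  ∀ C : Set (ℕ × List Ω), MLTest P C → ∃ n : ℕ, 0 < n ∧ ¬ inOpen {σ | (n, σ) ∈ C} α
/-- The probability `P(A)` of an event `A ⊆ Ω`. -/
noncomputable def evP {Ω : Type*} [Fintype Ω] (P : Ω → ℝ) (A : Set Ω) : ℝ :=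
  ∑ x, A.indicator P x

open Finset Filter

section Words

variable {Γ : Type*} {Q : Γ → ℝ}

theorem prod_snoc_apply {m : ℕ} (ρ : Fin m → Γ) (a : Γ) :
    ∏ i, Q (Fin.snoc (α := fun _ => Γ) ρ a i) = (∏ i, Q (ρ i)) * Q a := by
  simp [Fin.prod_univ_castSucc]

variable [Fintype Γ]

theorem sum_snoc_eq {m : ℕ} (G : (Fin (m + 1) → Γ) → ℝ) :
    ∑ τ : Fin (m + 1) → Γ, G τ = ∑ ρ : Fin m → Γ, ∑ a, G (Fin.snoc ρ a) := by
  rw [← (Fin.snocEquiv fun _ => Γ).sum_comp, Fintype.sum_prod_type, sum_comm]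
  rfl

theorem sum_prod_eq_one (hQ : ∑ a, Q a = 1) (m : ℕ) : ∑ τ : Fin m → Γ, ∏ i, Q (τ i) = 1 := by
  simp [← Fintype.prod_sum, hQ]

theorem sum_comp_castLE_mul_prod (hQ : ∑ a, Q a = 1) {m L : ℕ} (hmL : m ≤ L)
    (F : (Fin m → Γ) → ℝ) :
    ∑ τ : Fin L → Γ, F (fun i => τ (Fin.castLE hmL i)) * ∏ i, Q (τ i) =
      ∑ ρ : Fin m → Γ, F ρ * ∏ i, Q (ρ i) := by
  induction L, hmL using Nat.le_induction with
  | base => rfl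
  | succ L hmL ih =>
    rw [sum_snoc_eq, ← ih]
    refine sum_congr rfl fun ρ _ => ?_
    have hrestrict : ∀ a,
        (fun i => Fin.snoc (α := fun _ => Γ) ρ a (Fin.castLE (hmL.trans L.le_succ) i)) =
          fun i => ρ (Fin.castLE hmL i) :=
      fun a => funext fun i => Fin.snoc_castSucc (α := fun _ => Γ) (i := Fin.castLE hmL i) ..
    simp_rw [hrestrict, prod_snoc_apply, ← mul_assoc, ← mul_sum, hQ, mul_one]

theorem sum_sq_sum_mul_prod (hQ : ∑ a, Q a = 1) {f : Γ → ℝ} (hf : ∑ a, f a * Q a = 0) (m : ℕ) :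
    ∑ τ : Fin m → Γ, (∑ j, f (τ j)) ^ 2 * ∏ i, Q (τ i) = m * ∑ a, f a ^ 2 * Q a := by
  induction m with
  | zero => simp
  | succ m ih =>
    have hsplit : ∀ (ρ : Fin m → Γ) (a : Γ),
        (∑ j, f (Fin.snoc (α := fun _ => Γ) ρ a j)) ^ 2 * ∏ i, Q (Fin.snoc (α := fun _ => Γ) ρ a i)
          = ((∑ j, f (ρ j)) ^ 2 * ∏ i, Q (ρ i)) * Q a
            + 2 * ((∑ j, f (ρ j)) * ∏ i, Q (ρ i)) * (f a * Q a)
            + (∏ i, Q (ρ i)) * (f a ^ 2 * Q a) := by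
      intro ρ a
      rw [prod_snoc_apply, Fin.sum_univ_castSucc]
      simp only [Fin.snoc_castSucc, Fin.snoc_last]
      ring
    simp_rw [sum_snoc_eq, hsplit, sum_add_distrib, ← mul_sum, ← sum_mul, hQ, hf, ih,
      sum_prod_eq_one hQ]
    push_cast
    ring

theorem IsFPS.apply_le_one (hQ : IsFPS Q) (b : Γ) : Q b ≤ 1 :=
  hQ.2 ▸ single_le_sum (fun b _ => hQ.1 b) (mem_univ b)

end Words

theorem sum_inv_two_pow_le {s : Finset ℕ} {k : ℕ} (hs : ∀ j ∈ s, k ≤ j) :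
    ∑ j ∈ s, (2 : ℝ)⁻¹ ^ j ≤ 2 * 2⁻¹ ^ k := by
  have hsummable : Summable fun j : ℕ => if k ≤ j then (2 : ℝ)⁻¹ ^ j else 0 :=
    (summable_geometric_of_lt_one (r := (2 : ℝ)⁻¹) (by norm_num) (by norm_num)).of_nonneg_of_le
      (fun j => by positivity) fun j => by split_ifs <;> first | exact le_rfl | positivity
  calc ∑ j ∈ s, (2 : ℝ)⁻¹ ^ j = ∑ j ∈ s, if k ≤ j then (2 : ℝ)⁻¹ ^ j else 0 :=
        sum_congr rfl fun j hj => (if_pos (hs j hj)).symm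
    _ ≤ ∑' j, if k ≤ j then (2 : ℝ)⁻¹ ^ j else 0 :=
        hsummable.sum_le_tsum s fun j _ => by positivity
    _ = 2 * 2⁻¹ ^ k := tsum_geometric_inv_two_ge k

section Sequences

variable {Ω Γ : Type*}

theorem length_seqPrefix (α : ℕ → Ω) (n : ℕ) : (seqPrefix α n).length = n :=
  List.length_ofFn

theorem seqPrefix_comp (φ : Ω → Γ) (α : ℕ → Ω) (m : ℕ) :
    seqPrefix (φ ∘ α) m = (seqPrefix α m).map φ := by
  rw [seqPrefix, seqPrefix, List.map_ofFn]
  rfl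

theorem seqPrefix_prefix_seqPrefix (α : ℕ → Ω) {m n : ℕ} (hmn : m ≤ n) :
    seqPrefix α m <+: seqPrefix α n := by
  rw [List.prefix_iff_eq_take]
  exact List.ext_getElem (by simp [length_seqPrefix, hmn]) fun i _ _ => by simp [seqPrefix]

theorem inOpen_of_seqPrefix_mem {S : Set (List Ω)} {α : ℕ → Ω} {n : ℕ}
    (h : seqPrefix α n ∈ S) : inOpen S α :=
  ⟨seqPrefix α n, h, by rw [length_seqPrefix]⟩

end Sequences

section LevelMeasure

variable {Ω : Type*}

def extensions (S : Set (List Ω)) (L : ℕ) : Set (Fin L → Ω) :=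
  {τ | ∃ σ ∈ S, σ <+: List.ofFn τ}

theorem mem_extensions {S : Set (List Ω)} {L : ℕ} {τ : Fin L → Ω} :
    τ ∈ extensions S L ↔ ∃ σ ∈ S, σ <+: List.ofFn τ :=
  Iff.rfl

theorem prefix_ofFn_iff {L : ℕ} {σ : List Ω} (τ : Fin L → Ω) :
    σ <+: List.ofFn τ ↔ ∃ h : σ.length ≤ L, σ = List.ofFn fun i => τ (Fin.castLE h i) := by
  constructor
  · intro hσ
    have hlen : σ.length ≤ L := by simpa using hσ.length_le
    refine ⟨hlen, (List.prefix_iff_eq_take.1 hσ).trans ?_⟩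
    exact List.ext_getElem (by simp [hlen]) fun i _ _ => by simp
  · rintro ⟨h, hσ⟩
    rw [hσ, List.prefix_iff_eq_take]
    exact List.ext_getElem (by simp [h]) fun i _ _ => by simp

theorem mem_extensions_iff_of_length_eq {S : Set (List Ω)} {m L : ℕ}
    (hS : ∀ σ ∈ S, σ.length = m) (hmL : m ≤ L) (τ : Fin L → Ω) :
    τ ∈ extensions S L ↔ (fun i => τ (Fin.castLE hmL i)) ∈ extensions S m := by
  refine exists_congr fun σ => and_congr_right fun hσ => ?_
  simp only [prefix_ofFn_iff, hS σ hσ, hmL, le_refl, exists_true_left]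
  rfl

variable [Fintype Ω] {P : Ω → ℝ}

noncomputable def levelMeasure (P : Ω → ℝ) (S : Set (List Ω)) (L : ℕ) : ℝ :=
  ∑ τ : Fin L → Ω, (extensions S L).indicator (fun τ => ∏ i, P (τ i)) τ

theorem cylMeasure_eq_iSup_levelMeasure (P : Ω → ℝ) (S : Set (List Ω)) :
    cylMeasure P S = ⨆ L, levelMeasure P S L :=
  rfl

theorem levelMeasure_eq_sum_indicator_mul (P : Ω → ℝ) (S : Set (List Ω)) (L : ℕ) :
    levelMeasure P S L = ∑ τ : Fin L → Ω, (extensions S L).indicator 1 τ * ∏ i, P (τ i) := by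
  refine sum_congr rfl fun τ _ => ?_
  by_cases hτ : τ ∈ extensions S L <;> simp [hτ]

theorem levelMeasure_nonneg (hP : ∀ a, 0 ≤ P a) (S : Set (List Ω)) (L : ℕ) :
    0 ≤ levelMeasure P S L :=
  sum_nonneg fun _ _ => Set.indicator_nonneg (fun τ _ => prod_nonneg fun i _ => hP (τ i)) _

theorem levelMeasure_univ (hP : IsFPS P) (L : ℕ) : levelMeasure P Set.univ L = 1 := by
  rw [levelMeasure, ← sum_prod_eq_one hP.2 L]
  exact sum_congr rfl fun τ _ =>
    Set.indicator_of_mem (mem_extensions.2 ⟨[], Set.mem_univ _, List.nil_prefix⟩) _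

theorem levelMeasure_le_one (hP : IsFPS P) (S : Set (List Ω)) (L : ℕ) :
    levelMeasure P S L ≤ 1 := by
  rw [← levelMeasure_univ hP L]
  exact sum_le_sum fun τ _ => Set.indicator_le_indicator_of_subset
    (fun τ hτ => mem_extensions.2 <| (mem_extensions.1 hτ).imp fun σ hσ => ⟨Set.mem_univ σ, hσ.2⟩)
    (fun τ => prod_nonneg fun i _ => hP.1 (τ i)) _

theorem levelMeasure_le_cylMeasure (hP : IsFPS P) (S : Set (List Ω)) (L : ℕ) :
    levelMeasure P S L ≤ cylMeasure P S :=
  le_ciSup ⟨1, Set.forall_mem_range.2 (levelMeasure_le_one hP S)⟩ L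

theorem cylMeasure_le_of_forall_levelMeasure_le {S : Set (List Ω)} {c : ℝ}
    (h : ∀ L, levelMeasure P S L ≤ c) : cylMeasure P S ≤ c :=
  ciSup_le h

theorem levelMeasure_le_sum_filter (hP : ∀ a, 0 ≤ P a) {S : Set (List Ω)} {L : ℕ}
    {p : (Fin L → Ω) → Prop} [DecidablePred p] (hS : ∀ τ ∈ extensions S L, p τ) :
    levelMeasure P S L ≤ ∑ τ with p τ, ∏ i, P (τ i) := by
  rw [levelMeasure, sum_filter]
  refine sum_le_sum fun τ _ => ?_
  by_cases hτ : τ ∈ extensions S L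
  · rw [Set.indicator_of_mem hτ, if_pos (hS τ hτ)]
  · rw [Set.indicator_of_notMem hτ]
    split_ifs
    · exact prod_nonneg fun i _ => hP (τ i)
    · exact le_rfl

theorem levelMeasure_le_sum_of_subset (hP : ∀ a, 0 ≤ P a) {ι : Type*} {S : Set (List Ω)}
    {T : ι → Set (List Ω)} {I : Finset ι} {L : ℕ}
    (hST : extensions S L ⊆ ⋃ i ∈ I, extensions (T i) L) :
    levelMeasure P S L ≤ ∑ i ∈ I, levelMeasure P (T i) L := by
  unfold levelMeasure
  rw [sum_comm]
  refine sum_le_sum fun τ _ => ?_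
  have hw : 0 ≤ ∏ j, P (τ j) := prod_nonneg fun j _ => hP (τ j)
  by_cases hτ : τ ∈ extensions S L
  · obtain ⟨i, hi, hiτ⟩ := Set.mem_iUnion₂.1 (hST hτ)
    rw [Set.indicator_of_mem hτ, ← Set.indicator_of_mem hiτ (fun τ => ∏ j, P (τ j))]
    exact single_le_sum (f := fun i => (extensions (T i) L).indicator (fun τ => ∏ j, P (τ j)) τ)
      (fun i _ => Set.indicator_nonneg (fun _ _ => hw) _) hi
  · rw [Set.indicator_of_notMem hτ]
    exact sum_nonneg fun i _ => Set.indicator_nonneg (fun _ _ => hw) _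

/-- Only the first `m` letters matter for a set of words of length `m`, and the remaining
letters carry total weight one. -/
theorem levelMeasure_eq_of_length_eq (hP : ∑ a, P a = 1) {S : Set (List Ω)} {m L : ℕ}
    (hS : ∀ σ ∈ S, σ.length = m) (hmL : m ≤ L) :
    levelMeasure P S L = levelMeasure P S m := by
  have hind : ∀ τ : Fin L → Ω, (extensions S L).indicator (1 : (Fin L → Ω) → ℝ) τ =
      (extensions S m).indicator 1 fun i => τ (Fin.castLE hmL i) := fun τ => by
    classical
    simp only [Set.indicator_apply, mem_extensions_iff_of_length_eq hS hmL, Pi.one_apply]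
  rw [levelMeasure_eq_sum_indicator_mul, levelMeasure_eq_sum_indicator_mul,
    ← sum_comp_castLE_mul_prod hP hmL]
  exact sum_congr rfl fun τ _ => by rw [hind]

theorem cylMeasure_setOf_exists_le (hP : IsFPS P) {E : ℕ → Set (List Ω)} {len : ℕ → ℕ}
    (hlen : StrictMono len) (hE_len : ∀ j, ∀ σ ∈ E j, σ.length = len j) {c : ℝ}
    (hE : ∀ j, levelMeasure P (E j) (len j) ≤ c * 2⁻¹ ^ j) (k : ℕ) :
    cylMeasure P {σ | ∃ j, k ≤ j ∧ σ ∈ E j} ≤ c * (2 * 2⁻¹ ^ k) := by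
  have hc : 0 ≤ c := by simpa using (levelMeasure_nonneg hP.1 (E 0) (len 0)).trans (hE 0)
  refine cylMeasure_le_of_forall_levelMeasure_le fun L => ?_
  set I := (range (L + 1)).filter fun j => k ≤ j ∧ len j ≤ L
  have hcover : extensions {σ | ∃ j, k ≤ j ∧ σ ∈ E j} L ⊆ ⋃ j ∈ I, extensions (E j) L := by
    rintro τ ⟨σ, ⟨j, hkj, hσ⟩, hστ⟩
    have hjL : len j ≤ L := by simpa [hE_len j σ hσ] using hστ.length_le
    exact Set.mem_iUnion₂.2 ⟨j, mem_filter.2 ⟨mem_range.2 (Nat.lt_succ_of_le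
      (hlen.le_apply.trans hjL)), hkj, hjL⟩, σ, hσ, hστ⟩
  calc levelMeasure P {σ | ∃ j, k ≤ j ∧ σ ∈ E j} L
      ≤ ∑ j ∈ I, levelMeasure P (E j) L := levelMeasure_le_sum_of_subset hP.1 hcover
    _ = ∑ j ∈ I, levelMeasure P (E j) (len j) := sum_congr rfl fun j hj =>
        levelMeasure_eq_of_length_eq hP.2 (hE_len j) (mem_filter.1 hj).2.2
    _ ≤ ∑ j ∈ I, c * 2⁻¹ ^ j := sum_le_sum fun j _ => hE j
    _ ≤ c * (2 * 2⁻¹ ^ k) := by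
        rw [← mul_sum]
        exact mul_le_mul_of_nonneg_left (sum_inv_two_pow_le fun j hj =>
          (mem_filter.1 hj).2.1) hc

end LevelMeasure

section Pushforward

variable {Ω Γ : Type*} [Fintype Ω] [DecidableEq Γ] {P : Ω → ℝ}

noncomputable def pushforward (P : Ω → ℝ) (φ : Ω → Γ) (b : Γ) : ℝ :=
  ∑ a with φ a = b, P a

theorem sum_comp_mul_eq_sum_mul_pushforward [Fintype Γ] (φ : Ω → Γ) (G : Γ → ℝ) :
    ∑ a, G (φ a) * P a = ∑ b, G b * pushforward P φ b := by
  simp_rw [pushforward, mul_sum]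
  rw [← sum_fiberwise univ φ]
  exact sum_congr rfl fun b _ => sum_congr rfl fun a ha => by rw [(mem_filter.1 ha).2]

theorem IsFPS.pushforward [Fintype Γ] (hP : IsFPS P) (φ : Ω → Γ) : IsFPS (pushforward P φ) :=
  ⟨fun _ => sum_nonneg fun a _ => hP.1 a, (sum_fiberwise univ φ P).trans hP.2⟩

theorem pushforward_pi {ι : Type*} [Fintype ι] [DecidableEq ι] (φ : Ω → Γ) (υ : ι → Γ) :
    pushforward (fun τ : ι → Ω => ∏ i, P (τ i)) (φ ∘ ·) υ = ∏ i, pushforward P φ (υ i) := by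
  unfold pushforward
  rw [prod_univ_sum]
  congr 1
  ext τ
  simp [Fintype.mem_piFinset, funext_iff]

end Pushforward

section Map

variable {Ω Γ : Type*}

theorem inOpen_setOf_map_mem_iff (φ : Ω → Γ) (C : Set (List Γ)) (α : ℕ → Ω) :
    inOpen {σ | σ.map φ ∈ C} α ↔ inOpen C (φ ∘ α) := by
  constructor
  · rintro ⟨σ, hσ, hασ⟩
    exact ⟨σ.map φ, hσ, by rw [List.length_map, seqPrefix_comp, hασ]⟩
  · rintro ⟨σ, hσ, hασ⟩
    refine ⟨seqPrefix α σ.length, ?_, by simp [seqPrefix]⟩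
    show (seqPrefix α σ.length).map φ ∈ C
    rwa [← seqPrefix_comp, hασ]

theorem mem_extensions_setOf_map_mem_iff (φ : Ω → Γ) (C : Set (List Γ)) {L : ℕ}
    (τ : Fin L → Ω) : τ ∈ extensions {σ | σ.map φ ∈ C} L ↔ φ ∘ τ ∈ extensions C L := by
  constructor
  · rintro ⟨σ, hσ, hστ⟩
    exact ⟨σ.map φ, hσ, by simpa [List.map_ofFn] using hστ.map φ⟩
  · rintro ⟨σ, hσ, hστ⟩
    refine ⟨(List.ofFn τ).take σ.length, ?_, List.take_prefix _ _⟩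
    show ((List.ofFn τ).take σ.length).map φ ∈ C
    rwa [List.map_take, List.map_ofFn, ← List.prefix_iff_eq_take.1 hστ]

variable [Fintype Ω] [Fintype Γ]

theorem REset.preimage_map (φ : Ω → Γ) {C : Set (ℕ × List Γ)} (hC : REset C) :
    REset {p : ℕ × List Ω | (p.1, p.2.map φ) ∈ C} := by
  obtain ⟨e, hC⟩ := hC
  refine ⟨Fintype.equivFin Ω, ?_⟩
  have hrecode : Computable fun p : ℕ × List (Fin (Fintype.card Ω)) =>
      (p.1, p.2.map (e ∘ φ ∘ (Fintype.equivFin Ω).symm)) :=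
    (Primrec.fst.pair (Primrec.list_map Primrec.snd
      ((Primrec.dom_finite _).comp Primrec.snd).to₂)).to_comp
  refine REPred.of_eq (hC.comp hrecode) fun p => ?_
  simp [List.map_map, Function.comp_def]

variable [DecidableEq Γ] {P : Ω → ℝ}

theorem levelMeasure_setOf_map_mem (φ : Ω → Γ) (C : Set (List Γ)) (L : ℕ) :
    levelMeasure P {σ | σ.map φ ∈ C} L = levelMeasure (pushforward P φ) C L := by
  classical
  have hind : ∀ τ : Fin L → Ω, (extensions {σ | σ.map φ ∈ C} L).indicator (1 : (Fin L → Ω) → ℝ) τ =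
      (extensions C L).indicator 1 (φ ∘ τ) := fun τ => by
    simp only [Set.indicator_apply, mem_extensions_setOf_map_mem_iff, Pi.one_apply]
  rw [levelMeasure_eq_sum_indicator_mul, levelMeasure_eq_sum_indicator_mul]
  simp_rw [hind, ← pushforward_pi]
  exact sum_comp_mul_eq_sum_mul_pushforward (φ ∘ ·) _

theorem cylMeasure_setOf_map_mem (φ : Ω → Γ) (C : Set (List Γ)) :
    cylMeasure P {σ | σ.map φ ∈ C} = cylMeasure (pushforward P φ) C := by
  simp only [cylMeasure_eq_iSup_levelMeasure, levelMeasure_setOf_map_mem]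

theorem MLRandom.map {α : ℕ → Ω} (hα : MLRandom P α) (φ : Ω → Γ) :
    MLRandom (pushforward P φ) (φ ∘ α) := by
  intro C hC
  have hpull : MLTest P {p : ℕ × List Ω | (p.1, p.2.map φ) ∈ C} :=
    ⟨hC.1.preimage_map φ, fun m hm =>
      (cylMeasure_setOf_map_mem φ {σ | (m, σ) ∈ C}).trans_lt (hC.2 m hm)⟩
  obtain ⟨m, hm, hαm⟩ := hα _ hpull
  exact ⟨m, hm, fun h => hαm ((inOpen_setOf_map_mem_iff φ {σ | (m, σ) ∈ C} α).2 h)⟩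

end Map

section Independence

variable {Ω ι : Type*} [Fintype Ω] {P : Ω → ℝ}

theorem evP_eq_sum_mul_boole (S : Set Ω) [DecidablePred (· ∈ S)] :
    evP P S = ∑ a, P a * if a ∈ S then 1 else 0 := by
  simp only [evP, Set.indicator_apply, mul_boole]

theorem evP_nonneg (hP : IsFPS P) (A : Set Ω) : 0 ≤ evP P A :=
  sum_nonneg fun a _ => Set.indicator_nonneg (fun a _ => hP.1 a) a

theorem evP_le_one (hP : IsFPS P) (A : Set Ω) : evP P A ≤ 1 :=
  hP.2 ▸ sum_le_sum fun a _ => Set.indicator_le_self' (fun a _ => hP.1 a) a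

theorem evP_setOf_forall_mem [DecidableEq Ω] (A : ι → Finset Ω) (s : Finset ι) :
    evP P {a | ∀ i ∈ s, a ∈ A i} = ∑ a, P a * ∏ i ∈ s, if a ∈ A i then 1 else 0 := by
  simp [evP, Set.indicator_apply, prod_boole]

variable [Fintype ι]

/-- `P_{A₁} × ⋯ × P_{Aₙ}` for `p i = P(Aᵢ)`. -/
def bernoulliPi (p : ι → ℝ) (b : ι → Bool) : ℝ :=
  ∏ i, if b i then p i else 1 - p i

variable [DecidableEq ι]

theorem sum_mul_prod_add_mul_eq (X : ι → Ω → ℝ)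
    (hX : ∀ s : Finset ι, ∑ a, P a * ∏ i ∈ s, X i a = ∏ i ∈ s, ∑ a, P a * X i a) (c d : ι → ℝ) :
    ∑ a, P a * ∏ i, (c i + d i * X i a) = ∏ i, (c i + d i * ∑ a, P a * X i a) := by
  simp_rw [Fintype.prod_add, prod_mul_distrib, ← hX, mul_sum]
  rw [sum_comm]
  exact sum_congr rfl fun t _ => sum_congr rfl fun a _ => by ring

theorem sum_prod_boole_mul_bernoulliPi (p : ι → ℝ) (s : Finset ι) :
    ∑ b : ι → Bool, (∏ i ∈ s, if b i then 1 else 0) * bernoulliPi p b = ∏ i ∈ s, p i := by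
  have hfactor : ∀ b : ι → Bool, (∏ i ∈ s, if b i then 1 else 0) * bernoulliPi p b =
      ∏ i, (if i ∈ s then (if b i then 1 else 0) else 1) * (if b i then p i else 1 - p i) :=
    fun b => by rw [prod_mul_distrib, Fintype.prod_ite_mem, bernoulliPi]
  rw [sum_congr rfl fun b _ => hfactor b, ← Fintype.prod_sum fun i (v : Bool) =>
    (if i ∈ s then (if v then 1 else 0) else 1) * (if v then p i else 1 - p i),
    ← Fintype.prod_ite_mem s p]
  exact prod_congr rfl fun i _ => by split_ifs <;> simp

theorem isFPS_bernoulliPi {p : ι → ℝ} (h0 : ∀ i, 0 ≤ p i) (h1 : ∀ i, p i ≤ 1) :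
    IsFPS (bernoulliPi p) := by
  refine ⟨fun b => prod_nonneg fun i _ => ?_, ?_⟩
  · split_ifs
    · exact h0 i
    · exact sub_nonneg.2 (h1 i)
  · simpa using sum_prod_boole_mul_bernoulliPi p ∅

variable [DecidableEq Ω]

theorem indep_iff_pushforward_eq_bernoulliPi (hP : IsFPS P) (A : ι → Finset Ω) :
    (∀ s : Finset ι, s.Nonempty →
        evP P {a | ∀ i ∈ s, a ∈ A i} = ∏ i ∈ s, evP P (A i : Set Ω)) ↔
      pushforward P (fun a i => decide (a ∈ A i)) = bernoulliPi fun i => evP P (A i : Set Ω) := by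
  set X : ι → Ω → ℝ := fun i a => if a ∈ A i then 1 else 0
  have hevP : ∀ i, evP P (A i : Set Ω) = ∑ a, P a * X i a := fun i => evP_eq_sum_mul_boole _
  constructor
  · intro hindep
    have hX : ∀ s, ∑ a, P a * ∏ i ∈ s, X i a = ∏ i ∈ s, ∑ a, P a * X i a := by
      intro s
      rcases s.eq_empty_or_nonempty with rfl | hs
      · simpa using hP.2
      · rw [← evP_setOf_forall_mem, hindep s hs]
        simp_rw [hevP]
    funext b
    have hfiber : ∀ a, (if (fun i => decide (a ∈ A i)) = b then (1 : ℝ) else 0) =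
        ∏ i, ((if b i then 0 else 1) + (if b i then 1 else -1) * X i a) := by
      intro a
      simp only [funext_iff]
      rw [← Fintype.prod_boole]
      refine prod_congr rfl fun i _ => ?_
      by_cases ha : a ∈ A i <;> cases b i <;> simp [X, ha]
    rw [pushforward, sum_filter, bernoulliPi,
      sum_congr rfl fun a _ => by rw [← mul_boole, hfiber], sum_mul_prod_add_mul_eq X hX]
    simp_rw [← hevP]
    exact prod_congr rfl fun i _ => by cases b i <;> simp [sub_eq_add_neg]
  · intro hpush s _
    have hcomp : ∀ a, P a * ∏ i ∈ s, X i a =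
        (∏ i ∈ s, if (fun i => decide (a ∈ A i)) i then 1 else 0) * P a := fun a => by
      simp [X, mul_comm]
    rw [evP_setOf_forall_mem, sum_congr rfl fun a _ => hcomp a,
      sum_comp_mul_eq_sum_mul_pushforward (fun a i => decide (a ∈ A i))
        fun b => ∏ i ∈ s, if b i then 1 else 0, hpush, sum_prod_boole_mul_bernoulliPi]

end Independence

theorem sum_filter_le_sum_sq_mul_div {X : Type*} [Fintype X] {w : X → ℝ} (hw : ∀ x, 0 ≤ w x)
    (g : X → ℝ) {t : ℝ} (ht : 0 < t) :
    ∑ x with t ≤ |g x|, w x ≤ (∑ x, g x ^ 2 * w x) / t ^ 2 := by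
  rw [le_div_iff₀ (by positivity), sum_mul]
  calc ∑ x with t ≤ |g x|, w x * t ^ 2
      ≤ ∑ x with t ≤ |g x|, g x ^ 2 * w x := sum_le_sum fun x hx => by
        rw [mul_comm, ← sq_abs (g x)]
        exact mul_le_mul_of_nonneg_right (pow_le_pow_left₀ ht.le (mem_filter.1 hx).2 2) (hw x)
    _ ≤ ∑ x, g x ^ 2 * w x :=
        sum_le_sum_of_subset_of_nonneg (filter_subset _ _) fun x _ _ => by
          have := hw x
          positivity

theorem natCast_count_ofFn {Γ : Type*} [DecidableEq Γ] (b0 : Γ) {m : ℕ} (τ : Fin m → Γ) :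
    ((List.ofFn τ).count b0 : ℝ) = ∑ i, if τ i = b0 then 1 else 0 := by
  induction m with
  | zero => simp
  | succ m ih =>
    rw [List.ofFn_succ, List.count_cons, Fin.sum_univ_succ, ← ih]
    by_cases h : τ 0 = b0 <;> simp [h, add_comm]

theorem primrec_list_count {α : Type*} [Primcodable α] [DecidableEq α] (c : α) :
    Primrec fun l : List α => l.count c :=
  (Primrec.list_length.comp (Primrec.listFilter (Primrec.eq.comp Primrec.id
    (Primrec.const c)))).of_eq fun l => by
    rw [List.count_eq_length_filter]
    rfl

section Frequency

variable {Γ : Type*} [Fintype Γ] [DecidableEq Γ] {Q : Γ → ℝ}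

theorem sum_sq_count_sub_mul_prod (hQ : IsFPS Q) (b0 : Γ) (m : ℕ) :
    ∑ τ : Fin m → Γ, (((List.ofFn τ).count b0 : ℝ) - m * Q b0) ^ 2 * ∏ i, Q (τ i) =
      m * (Q b0 * (1 - Q b0)) := by
  set p := Q b0
  set f : Γ → ℝ := fun x => (if x = b0 then 1 else 0) - p
  have hf : ∑ x, f x * Q x = 0 := by
    simp [f, sub_mul, sum_sub_distrib, ← mul_sum, hQ.2, p]
  have hf2 : ∑ x, f x ^ 2 * Q x = p * (1 - p) := by
    have : ∀ x, f x ^ 2 * Q x = (if x = b0 then Q x else 0) * (1 - 2 * p) + p ^ 2 * Q x := by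
      intro x
      by_cases hx : x = b0
      · simp only [f, hx, if_true]
        ring
      · simp [f, hx]
    simp only [this, sum_add_distrib, ← sum_mul, ← mul_sum, sum_ite_eq', mem_univ, if_true, hQ.2]
    ring
  have hcentre : ∀ τ : Fin m → Γ, ((List.ofFn τ).count b0 : ℝ) - m * p = ∑ j, f (τ j) :=
    fun τ => by simp [f, natCast_count_ofFn, sum_sub_distrib]
  simp_rw [hcentre, sum_sq_sum_mul_prod hQ.2 hf, hf2]

/-- Chebyshev: a frequency of `b0` of at least `a / d ≥ Q b0 + 1 / d` in a word of length `m` is a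
deviation of at least `m / d` from the mean, while the variance is `m Q b0 (1 - Q b0) ≤ m / 4`. -/
theorem levelMeasure_count_ge_le (hQ : IsFPS Q) (b0 : Γ) {a d m : ℕ} (hd : 0 < d)
    (hm : 0 < m) (hgap : d * Q b0 + 1 ≤ a) :
    levelMeasure Q {σ | σ.length = m ∧ a * σ.length ≤ d * σ.count b0} m ≤ d ^ 2 / (4 * m) := by
  set g : (Fin m → Γ) → ℝ := fun τ => ((List.ofFn τ).count b0 : ℝ) - m * Q b0
  have hdR : (0 : ℝ) < d := by exact_mod_cast hd
  have hmR : (0 : ℝ) < m := by exact_mod_cast hm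
  have hdev : ∀ τ ∈ extensions {σ | σ.length = m ∧ a * σ.length ≤ d * σ.count b0} m,
      m / d ≤ |g τ| := by
    rintro τ ⟨σ, ⟨hσm, hσ⟩, hστ⟩
    rw [hστ.eq_of_length (by simp [hσm])] at hσ
    have hσR : (a : ℝ) * m ≤ d * ((List.ofFn τ).count b0 : ℝ) := by
      exact_mod_cast (by simpa using hσ)
    rw [div_le_iff₀ hdR]
    have : (d * Q b0 + 1) * m ≤ a * m := mul_le_mul_of_nonneg_right hgap hmR.le
    nlinarith [le_abs_self (g τ)]
  calc levelMeasure Q {σ | σ.length = m ∧ a * σ.length ≤ d * σ.count b0} m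
      ≤ ∑ τ : Fin m → Γ with m / d ≤ |g τ|, ∏ i, Q (τ i) :=
        levelMeasure_le_sum_filter hQ.1 hdev
    _ ≤ (∑ τ : Fin m → Γ, g τ ^ 2 * ∏ i, Q (τ i)) / (m / d) ^ 2 :=
        sum_filter_le_sum_sq_mul_div (fun τ => prod_nonneg fun i _ => hQ.1 (τ i)) g (by positivity)
    _ = d ^ 2 * (Q b0 * (1 - Q b0)) / m := by
        rw [sum_sq_count_sub_mul_prod hQ]
        field_simp
    _ ≤ d ^ 2 / (4 * m) := by
        rw [div_le_div_iff₀ hmR (by positivity)]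
        nlinarith [mul_nonneg (mul_nonneg (sq_nonneg (d : ℝ)) hmR.le) (sq_nonneg (2 * Q b0 - 1))]

/-- Word lengths `d² 2ʲ` make the Chebyshev bound at level `j` equal to `2⁻ʲ / 4`; these sum to
`2⁻ᵏ / 2` over `j ≥ k`. -/
def freqTest (b0 : Γ) (a d : ℕ) : Set (ℕ × List Γ) :=
  {p | ∃ j, p.1 ≤ j ∧ p.2.length = d ^ 2 * 2 ^ j ∧ a * p.2.length ≤ d * p.2.count b0}

theorem reSet_freqTest (b0 : Γ) (a : ℕ) {d : ℕ} (hd : 0 < d) : REset (freqTest b0 a d) := by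
  set e := Fintype.equivFin Γ
  refine ⟨e, ComputablePred.to_re (PrimrecPred.computablePred ?_)⟩
  let R : ℕ → ℕ × List (Fin (Fintype.card Γ)) → Prop := fun j p =>
    p.1 ≤ j ∧ p.2.length = d ^ 2 * 2 ^ j ∧ a * p.2.length ≤ d * p.2.count (e b0)
  have hR : PrimrecRel R := by
    have hlength : Primrec fun q : ℕ × ℕ × List (Fin (Fintype.card Γ)) => q.2.2.length :=
      Primrec.list_length.comp (Primrec.snd.comp Primrec.snd)
    exact (Primrec.nat_le.comp (Primrec.fst.comp Primrec.snd) Primrec.fst).and <|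
      (Primrec.eq.comp hlength (Primrec.nat_mul.comp (Primrec.const _)
        ((Primrec₂.unpaired'.1 Nat.Primrec.pow).comp (Primrec.const 2) Primrec.fst))).and <|
      Primrec.nat_le.comp (Primrec.nat_mul.comp (Primrec.const a) hlength)
        (Primrec.nat_mul.comp (Primrec.const d)
          ((primrec_list_count _).comp (Primrec.snd.comp Primrec.snd)))
  have hbounded : PrimrecPred fun p : ℕ × List (Fin (Fintype.card Γ)) =>
      ∃ j ∈ List.range (p.2.length + 1), R j p :=
    hR.exists_mem_list.comp (Primrec.list_range.comp
      (Primrec.succ.comp (Primrec.list_length.comp Primrec.snd))) Primrec.id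
  refine hbounded.of_eq fun p => ?_
  have hcount : (p.2.map e.symm).count b0 = p.2.count (e b0) := by
    simpa using List.count_map_of_injective p.2 e.symm e.symm.injective (e b0)
  simp only [freqTest, Set.mem_ofPred_eq, List.length_map, hcount, R, List.mem_range]
  refine ⟨fun ⟨j, _, hj⟩ => ⟨j, hj⟩, fun ⟨j, hj⟩ => ⟨j, ?_, hj⟩⟩
  rw [hj.2.1, Nat.lt_succ_iff]
  exact (Nat.lt_two_pow_self).le.trans (Nat.le_mul_of_pos_left _ (by positivity))

theorem mlTest_freqTest (hQ : IsFPS Q) (b0 : Γ) {a d : ℕ} (hd : 0 < d)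
    (hgap : d * Q b0 + 1 ≤ a) : MLTest Q (freqTest b0 a d) := by
  refine ⟨reSet_freqTest b0 a hd, fun k _ => ?_⟩
  have hlen : StrictMono fun j => d ^ 2 * 2 ^ j := fun i j hij =>
    Nat.mul_lt_mul_of_pos_left (Nat.pow_lt_pow_right one_lt_two hij) (by positivity)
  have hlevel : ∀ j, levelMeasure Q {σ | σ.length = d ^ 2 * 2 ^ j ∧
      a * σ.length ≤ d * σ.count b0} (d ^ 2 * 2 ^ j) ≤ 4⁻¹ * 2⁻¹ ^ j := fun j => by
    refine (levelMeasure_count_ge_le hQ b0 hd (by positivity) hgap).trans_eq ?_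
    push_cast
    field_simp
    rw [← mul_pow]
    norm_num
  calc cylMeasure Q {σ | (k, σ) ∈ freqTest b0 a d} ≤ 4⁻¹ * (2 * 2⁻¹ ^ k) :=
        cylMeasure_setOf_exists_le hQ hlen (fun _ _ hσ => hσ.1) hlevel k
    _ < 2⁻¹ ^ k := by
        have : (0 : ℝ) < 2⁻¹ ^ k := by positivity
        linarith

theorem MLRandom.eventually_mul_count_lt (hQ : IsFPS Q) {β : ℕ → Γ} (hβ : MLRandom Q β)
    (b0 : Γ) {a d : ℕ} (hd : 0 < d) (hgap : d * Q b0 + 1 ≤ a) :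
    ∀ᶠ j in atTop, d * (seqPrefix β (d ^ 2 * 2 ^ j)).count b0 < a * (d ^ 2 * 2 ^ j) := by
  obtain ⟨k, -, hk⟩ := hβ _ (mlTest_freqTest hQ b0 hd hgap)
  refine eventually_atTop.2 ⟨k, fun j hj => lt_of_not_ge fun hge => hk ?_⟩
  exact inOpen_of_seqPrefix_mem ⟨j, hj, length_seqPrefix _ _, by rwa [length_seqPrefix]⟩

end Frequency

theorem count_false_map_decide_add_count {Γ : Type*} [DecidableEq Γ] (b0 : Γ) (l : List Γ) :
    (l.map fun x => decide (x = b0)).count false + l.count b0 = l.length := by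
  have htrue : (l.map fun x => decide (x = b0)).count true = l.count b0 := by
    induction l with
    | nil => rfl
    | cons x l ih => by_cases hx : x = b0 <;> simp [hx, ih]
  rw [← htrue, add_comm, List.count_true_add_count_false, List.length_map]

section Uniqueness

variable {Γ : Type*} [Fintype Γ] [DecidableEq Γ] {Q₁ Q₂ : Γ → ℝ} {β : ℕ → Γ}

theorem pushforward_decide_eq_false (hQ : IsFPS Q₂) (b0 : Γ) :
    pushforward Q₂ (fun x => decide (x = b0)) false = 1 - Q₂ b0 := by
  have htotal := (hQ.pushforward fun x => decide (x = b0)).2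
  have htrue : pushforward Q₂ (fun x => decide (x = b0)) true = Q₂ b0 := by
    simp [pushforward, filter_eq']
  rw [Fintype.sum_bool, htrue] at htotal
  linarith

/-- With `Q₁ b0 + 1 / d ≤ a / d` and `a / d + 1 / d ≤ Q₂ b0`, randomness for `Q₁` makes the
frequency of `b0` along the lengths `d² 2ʲ` eventually less than `a / d`, and randomness for `Q₂`,
applied to the indicator sequence of `b0` and the letter `false`, makes it eventually greater. -/
theorem not_lt_of_mlRandom (h₁ : IsFPS Q₁) (h₂ : IsFPS Q₂) (hβ₁ : MLRandom Q₁ β)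
    (hβ₂ : MLRandom Q₂ β) (b0 : Γ) : ¬ Q₁ b0 < Q₂ b0 := by
  intro hlt
  obtain ⟨d, hd⟩ := exists_nat_gt (3 / (Q₂ b0 - Q₁ b0))
  have hd3 : 3 < d * (Q₂ b0 - Q₁ b0) := (div_lt_iff₀ (sub_pos.2 hlt)).1 hd
  have hd0 : 0 < d := Nat.pos_of_ne_zero fun h => by norm_num [h] at hd3
  set a := ⌊d * Q₁ b0⌋₊ + 2
  have hfloor := Nat.floor_le (mul_nonneg d.cast_nonneg (h₁.1 b0))
  have hgap₁ : d * Q₁ b0 + 1 ≤ a := by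
    push_cast [a]
    linarith [Nat.lt_floor_add_one (d * Q₁ b0)]
  have had : a ≤ d := by
    have : (a : ℝ) ≤ d := by
      push_cast [a]
      linarith [mul_le_of_le_one_right d.cast_nonneg (h₂.apply_le_one b0)]
    exact_mod_cast this
  set φ : Γ → Bool := fun x => decide (x = b0)
  have hgap₂ : d * pushforward Q₂ φ false + 1 ≤ (d - a : ℕ) := by
    rw [pushforward_decide_eq_false h₂, Nat.cast_sub had]
    push_cast [a]
    linarith
  obtain ⟨j, hj₁, hj₂⟩ := ((hβ₁.eventually_mul_count_lt h₁ b0 hd0 hgap₁).and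
    ((hβ₂.map φ).eventually_mul_count_lt (h₂.pushforward φ) false hd0 hgap₂)).exists
  have hsplit := count_false_map_decide_add_count b0 (seqPrefix β (d ^ 2 * 2 ^ j))
  rw [seqPrefix_comp] at hj₂
  rw [length_seqPrefix] at hsplit
  zify [had] at hj₁ hj₂ hsplit
  nlinarith

theorem eq_of_mlRandom (h₁ : IsFPS Q₁) (h₂ : IsFPS Q₂) (hβ₁ : MLRandom Q₁ β)
    (hβ₂ : MLRandom Q₂ β) : Q₁ = Q₂ :=
  funext fun b => le_antisymm (not_lt.1 (not_lt_of_mlRandom h₂ h₁ hβ₂ hβ₁ b))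
    (not_lt.1 (not_lt_of_mlRandom h₁ h₂ hβ₁ hβ₂ b))

theorem MLRandom.mlRandom_comp_iff {Ω Γ : Type*} [Fintype Ω] [Fintype Γ] [DecidableEq Γ]
    {P : Ω → ℝ} {Q : Γ → ℝ} (hP : IsFPS P) (hQ : IsFPS Q) {α : ℕ → Ω} (hα : MLRandom P α)
    (φ : Ω → Γ) : MLRandom Q (φ ∘ α) ↔ pushforward P φ = Q :=
  ⟨fun hβ => eq_of_mlRandom (hP.pushforward φ) hQ (hα.map φ) hβ, fun h => h ▸ hα.map φ⟩

end Uniqueness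

section Existence

variable {Ω : Type*}

theorem isOpen_setOf_seqPrefix_eq [TopologicalSpace Ω] [DiscreteTopology Ω] (σ : List Ω) :
    IsOpen {α : ℕ → Ω | seqPrefix α σ.length = σ} := by
  have hrestrict : Continuous fun (α : ℕ → Ω) (i : Fin σ.length) => α i :=
    continuous_pi fun i => continuous_apply (i : ℕ)
  exact (isOpen_discrete {τ : Fin σ.length → Ω | List.ofFn τ = σ}).preimage hrestrict

theorem exists_finset_extensions_cover [Finite Ω] [Nonempty Ω] {ι : Type*}
    {S : ι → Set (List Ω)} (hS : ∀ α : ℕ → Ω, ∃ i, inOpen (S i) α) :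
    ∃ (I : Finset ι) (L : ℕ), Set.univ ⊆ ⋃ i ∈ I, extensions (S i) L := by
  let _ : TopologicalSpace Ω := ⊥
  have : DiscreteTopology Ω := ⟨rfl⟩
  let V : ι × List Ω → Set (ℕ → Ω) := fun y => {α | y.2 ∈ S y.1 ∧ seqPrefix α y.2.length = y.2}
  have hV : ∀ y, IsOpen (V y) := fun y => isOpen_const.inter (isOpen_setOf_seqPrefix_eq y.2)
  obtain ⟨t, ht⟩ := isCompact_univ.elim_finite_subcover V hV fun α _ => by
    obtain ⟨i, σ, hσ, hασ⟩ := hS α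
    exact Set.mem_iUnion.2 ⟨(i, σ), hσ, hασ⟩
  classical
  set L := t.sup fun y => y.2.length
  refine ⟨t.image Prod.fst, L, fun τ _ => ?_⟩
  let α : ℕ → Ω := fun k => if h : k < L then τ ⟨k, h⟩ else Classical.arbitrary Ω
  obtain ⟨y, hy, hσ, hασ⟩ := Set.mem_iUnion₂.1 (ht (Set.mem_univ α))
  have hτ : List.ofFn τ = seqPrefix α L := by simp [seqPrefix, α]
  refine Set.mem_iUnion₂.2 ⟨y.1, mem_image_of_mem _ hy, y.2, hσ, ?_⟩
  rw [hτ, ← hασ]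
  exact seqPrefix_prefix_seqPrefix α (le_sup (f := fun y : ι × List Ω => y.2.length) hy)

variable [Fintype Ω]

theorem countable_setOf_reSet : {C : Set (ℕ × List Ω) | REset C}.Countable := by
  let ofCode : Nat.Partrec.Code × (Ω ≃ Fin (Fintype.card Ω)) → Set (ℕ × List Ω) :=
    fun c => {p | (c.1.eval (Encodable.encode (p.1, p.2.map c.2))).Dom}
  refine (Set.countable_range ofCode).mono ?_
  rintro C ⟨e, hC⟩
  obtain ⟨c, hc⟩ := Nat.Partrec.Code.exists_code.1 hC
  refine ⟨(c, e), Set.ext fun p => ?_⟩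
  simp [ofCode, hc, Encodable.encodek, Part.assert, List.map_map]

theorem exists_mlRandom {P : Ω → ℝ} (hP : IsFPS P) : ∃ α : ℕ → Ω, MLRandom P α := by
  have : Nonempty Ω := by
    by_contra h
    rw [not_nonempty_iff] at h
    simpa using hP.2
  have htests : {C : Set (ℕ × List Ω) | MLTest P C}.Countable :=
    countable_setOf_reSet.mono fun _ hC => hC.1
  obtain ⟨f, hf⟩ := Set.countable_iff_exists_injective.1 htests
  by_contra! hnone
  let S : {C | MLTest P C} → Set (List Ω) := fun C => {σ | (f C + 2, σ) ∈ C.1}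
  have hcover : ∀ α, ∃ C, inOpen (S C) α := fun α => by
    obtain ⟨C, hC, hα⟩ : ∃ C, MLTest P C ∧ ∀ n, 0 < n → inOpen {σ | (n, σ) ∈ C} α := by
      simpa [MLRandom] using hnone α
    exact ⟨⟨C, hC⟩, hα _ (by omega)⟩
  obtain ⟨I, L, hIL⟩ := exists_finset_extensions_cover hcover
  have hone := levelMeasure_le_sum_of_subset hP.1 (S := Set.univ) fun τ _ => hIL (Set.mem_univ τ)
  rw [levelMeasure_univ hP] at hone
  have hsmall : ∑ C ∈ I, levelMeasure P (S C) L ≤ 2⁻¹ :=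
    calc ∑ C ∈ I, levelMeasure P (S C) L
        ≤ ∑ C ∈ I, 4⁻¹ * (2 : ℝ)⁻¹ ^ f C := sum_le_sum fun C _ => by
          refine (levelMeasure_le_cylMeasure hP _ L).trans (C.2.2 _ (by omega)).le |>.trans_eq ?_
          ring
      _ = 4⁻¹ * ∑ j ∈ I.image f, (2 : ℝ)⁻¹ ^ j := by rw [sum_image hf.injOn, mul_sum]
      _ ≤ 4⁻¹ * (2 * 2⁻¹ ^ 0) :=
          mul_le_mul_of_nonneg_left (sum_inv_two_pow_le fun j _ => Nat.zero_le j) (by norm_num)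
      _ = 2⁻¹ := by norm_num
  linarith

end Existence

theorem independence_of_events_general {Ω : Type*} [Fintype Ω] [DecidableEq Ω]
    {n : ℕ} (P : Ω → ℝ) (hP : IsFPS P) (A : Fin n → Finset Ω) :
    ((∀ s : Finset (Fin n), s.Nonempty →
        evP P {a : Ω | ∀ i ∈ s, a ∈ A i} = ∏ i ∈ s, evP P ((A i : Set Ω))) ↔
      (∀ α : ℕ → Ω, MLRandom P α →
        MLRandom
          (fun x : Fin n → Bool =>
            ∏ i, if x i then evP P ((A i : Set Ω)) else 1 - evP P ((A i : Set Ω)))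
          (fun k => fun i => decide (α k ∈ A i)))) ∧
    ((∀ s : Finset (Fin n), s.Nonempty →
        evP P {a : Ω | ∀ i ∈ s, a ∈ A i} = ∏ i ∈ s, evP P ((A i : Set Ω))) ↔
      (∃ α : ℕ → Ω, MLRandom P α ∧
        MLRandom
          (fun x : Fin n → Bool =>
            ∏ i, if x i then evP P ((A i : Set Ω)) else 1 - evP P ((A i : Set Ω)))
          (fun k => fun i => decide (α k ∈ A i)))) := by
  have hQ : IsFPS (bernoulliPi fun i => evP P (A i : Set Ω)) :=
    isFPS_bernoulliPi (fun i => evP_nonneg hP _) fun i => evP_le_one hP _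
  have hχ : ∀ α, MLRandom P α → (MLRandom (bernoulliPi fun i => evP P (A i : Set Ω))
      (fun k i => decide (α k ∈ A i)) ↔ pushforward P (fun a i => decide (a ∈ A i)) =
        bernoulliPi fun i => evP P (A i : Set Ω)) :=
    fun α hα => hα.mlRandom_comp_iff hP hQ fun a i => decide (a ∈ A i)
  rw [indep_iff_pushforward_eq_bernoulliPi hP A]
  obtain ⟨α₀, hα₀⟩ := exists_mlRandom hP
  exact ⟨⟨fun h α hα => (hχ α hα).2 h, fun h => (hχ α₀ hα₀).1 (h α₀ hα₀)⟩,
    ⟨fun h => ⟨α₀, hα₀, (hχ α₀ hα₀).2 h⟩, fun ⟨α, hα, hβ⟩ => (hχ α hα).1 hβ⟩⟩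

/-- Events `A₁, …, Aₙ` are independent on `P` (every nonempty
subfamily multiplies) iff for every (iff for some) Martin-Löf `P`-random `α`, the
characteristic ensembles `χ_{A₁}(α), …, χ_{Aₙ}(α)` are independent, i.e. their product
sequence is Martin-Löf random with respect to the product `P_{A₁} × ⋯ × P_{Aₙ}` of the
two-point spaces `P_{Aᵢ}(1) = P(Aᵢ)`, `P_{Aᵢ}(0) = 1 − P(Aᵢ)`. -/
theorem independence_of_events {Ω : Type*} [Fintype Ω] [Nonempty Ω] [DecidableEq Ω]
    {n : ℕ} (P : Ω → ℝ) (hP : IsFPS P) (A : Fin n → Finset Ω) :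
    ((∀ s : Finset (Fin n), s.Nonempty →
        evP P {a : Ω | ∀ i ∈ s, a ∈ A i} = ∏ i ∈ s, evP P ((A i : Set Ω))) ↔
      (∀ α : ℕ → Ω, MLRandom P α →
        MLRandom
          (fun x : Fin n → Bool =>
            ∏ i, if x i then evP P ((A i : Set Ω)) else 1 - evP P ((A i : Set Ω)))
          (fun k => fun i => decide (α k ∈ A i)))) ∧
    ((∀ s : Finset (Fin n), s.Nonempty →
        evP P {a : Ω | ∀ i ∈ s, a ∈ A i} = ∏ i ∈ s, evP P ((A i : Set Ω))) ↔
      (∃ α : ℕ → Ω, MLRandom P α ∧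
        MLRandom
          (fun x : Fin n → Bool =>
            ∏ i, if x i then evP P ((A i : Set Ω)) else 1 - evP P ((A i : Set Ω)))
          (fun k => fun i => decide (α k ∈ A i)))) :=
  independence_of_events_general P hP A

end Paper
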